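/- arXiv:2311.01581 — 2 statements merged into one kernel-verified Lean document; each statement's English description precedes it below -/
import Mathlib

section
/- Sufficiency of the domination upper bound for PALS labels: if Δc_max(l₁, l₂) < 0, then for every t ≥ t_req the cost difference c(ι₁, t) - c(ι₂, t) of the corresponding PALS insertions is negative, where c(ι_i, t) = (t_arr(ι_i,t) - T) + τ·(t_arr(ι_i,t) + w'_i - t_req) + ω·(w_i + w'_i) + γ_wait·max(t_dep(p_i,t) - t_req - t_wait_max, 0) + γ_trip·max(t_arr(ι_i,t) + w'_i - t_req - t_trip_max, 0), with t_dep(p_i,t) = max(t + δ_i, t_req + w_i) and t_arr(ι_i,t) = t_dep(p_i,t) + π_i. -/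
/-!
Both costs are affine in the arrival time plus hinge terms `γ · max (· - c) 0` with `γ ≥ 0`;
`T` and the walking terms cancel in the difference. For `t ≥ t_req` we have
`t_dep(p₁,t) ≤ t + max δ₁ w₁` and `t_dep(p₂,t) ≥ t + δ₂`, so the departure times differ by at most
`Δ_dep` and the arrival times by at most `Δ_detour`, uniformly in `t`. Since
`max x 0 - max y 0 ≤ max (x - y) 0`, each hinge term of the difference is bounded by the
corresponding term of `Δc_max`, and the difference is at most `Δc_max < 0`.
-/

section

variable {α : Type*}

lemma max_add_sub_max_add_le [AddCommGroup α] [LinearOrder α] [IsOrderedAddMonoid α]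
    {s t : α} (hst : s ≤ t) (δ₁ δ₂ w₁ w₂ : α) :
    max (t + δ₁) (s + w₁) - max (t + δ₂) (s + w₂) ≤ max δ₁ w₁ - δ₂ := by
  have hdep₁ : max (t + δ₁) (s + w₁) ≤ t + max δ₁ w₁ :=
    max_le (by gcongr; exact le_max_left _ _) (add_le_add hst (le_max_right _ _))
  have hdep₂ : t + δ₂ ≤ max (t + δ₂) (s + w₂) := le_max_left _ _
  calc max (t + δ₁) (s + w₁) - max (t + δ₂) (s + w₂)
      ≤ t + max δ₁ w₁ - (t + δ₂) := sub_le_sub hdep₁ hdep₂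
    _ = max δ₁ w₁ - δ₂ := by abel

lemma mul_max_zero_sub_mul_max_zero_le [Ring α] [LinearOrder α] [IsOrderedRing α]
    {c x y d : α} (hc : 0 ≤ c) (h : x - y ≤ d) :
    c * max x 0 - c * max y 0 ≤ c * max d 0 := by
  rw [← mul_sub]
  refine mul_le_mul_of_nonneg_left ?_ hc
  calc max x 0 - max y 0 ≤ max (x - y) (0 - 0) := max_sub_max_le_max x 0 y 0
    _ ≤ max d 0 := by rw [sub_zero]; exact max_le_max_right 0 h

end

theorem pals_domination_sufficient_general
    (τ ω γwait γtrip twaitmax ttripmax treq T : ℝ)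
    (hτ : 0 ≤ τ) (hγw : 0 ≤ γwait) (hγt : 0 ≤ γtrip)
    (δ₁ δ₂ w₁ w₂ w₁' w₂' π₁ π₂ : ℝ)
    -- Δc_max(l₁,l₂) < 0 :
    (hdom :
      ((max δ₁ w₁ - δ₂) + π₁ - π₂) +
      τ * (((max δ₁ w₁ - δ₂) + π₁ - π₂) + w₁' - w₂') +
      ω * ((w₁ + w₁') - (w₂ + w₂')) +
      γwait * max (max δ₁ w₁ - δ₂) 0 +
      γtrip * max (((max δ₁ w₁ - δ₂) + π₁ - π₂) + w₁' - w₂') 0 < 0) :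
    ∀ t : ℝ, treq ≤ t →
      ((max (t + δ₁) (treq + w₁) + π₁ - T) +
        τ * (max (t + δ₁) (treq + w₁) + π₁ + w₁' - treq) +
        ω * (w₁ + w₁') +
        γwait * max (max (t + δ₁) (treq + w₁) - treq - twaitmax) 0 +
        γtrip * max (max (t + δ₁) (treq + w₁) + π₁ + w₁' - treq - ttripmax) 0) -
      ((max (t + δ₂) (treq + w₂) + π₂ - T) +
        τ * (max (t + δ₂) (treq + w₂) + π₂ + w₂' - treq) +
        ω * (w₂ + w₂') +
        γwait * max (max (t + δ₂) (treq + w₂) - treq - twaitmax) 0 +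
        γtrip * max (max (t + δ₂) (treq + w₂) + π₂ + w₂' - treq - ttripmax) 0) < 0 := by
  intro t ht
  have hdep := max_add_sub_max_add_le ht δ₁ δ₂ w₁ w₂
  set D₁ := max (t + δ₁) (treq + w₁)
  set D₂ := max (t + δ₂) (treq + w₂)
  have hwait := mul_max_zero_sub_mul_max_zero_le hγw
    (x := D₁ - treq - twaitmax) (y := D₂ - treq - twaitmax) (d := max δ₁ w₁ - δ₂) (by linarith)
  have htrip := mul_max_zero_sub_mul_max_zero_le hγt
    (x := D₁ + π₁ + w₁' - treq - ttripmax) (y := D₂ + π₂ + w₂' - treq - ttripmax)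
    (d := max δ₁ w₁ - δ₂ + π₁ - π₂ + w₁' - w₂') (by linarith)
  have hlinear := mul_le_mul_of_nonneg_left
    (show (D₁ + π₁ + w₁' - treq) - (D₂ + π₂ + w₂' - treq) ≤ max δ₁ w₁ - δ₂ + π₁ - π₂ + w₁' - w₂'
      by linarith) hτ
  linarith

/-- Sufficiency of the domination upper bound for PALS labels.
If `Δc_max(l₁, l₂) < 0` then for every vehicle arrival time `t ≥ t_req` the cost
difference of the corresponding PALS insertions is negative. -/
theorem pals_domination_sufficient
    (τ ω γwait γtrip twaitmax ttripmax treq T : ℝ)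
    (hτ : 0 ≤ τ) (hω : 0 ≤ ω) (hγw : 0 ≤ γwait) (hγt : 0 ≤ γtrip)
    (hwm : 0 ≤ twaitmax) (htm : 0 ≤ ttripmax)
    (δ₁ δ₂ w₁ w₂ w₁' w₂' π₁ π₂ : ℝ)
    (hδ₁ : 0 ≤ δ₁) (hδ₂ : 0 ≤ δ₂) (hw₁ : 0 ≤ w₁) (hw₂ : 0 ≤ w₂)
    (hw₁' : 0 ≤ w₁') (hw₂' : 0 ≤ w₂') (hπ₁ : 0 ≤ π₁) (hπ₂ : 0 ≤ π₂)
    -- Δc_max(l₁,l₂) < 0 :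
    (hdom :
      ((max δ₁ w₁ - δ₂) + π₁ - π₂) +
      τ * (((max δ₁ w₁ - δ₂) + π₁ - π₂) + w₁' - w₂') +
      ω * ((w₁ + w₁') - (w₂ + w₂')) +
      γwait * max (max δ₁ w₁ - δ₂) 0 +
      γtrip * max (((max δ₁ w₁ - δ₂) + π₁ - π₂) + w₁' - w₂') 0 < 0) :
    ∀ t : ℝ, treq ≤ t →
      ((max (t + δ₁) (treq + w₁) + π₁ - T) +
        τ * (max (t + δ₁) (treq + w₁) + π₁ + w₁' - treq) +
        ω * (w₁ + w₁') +
        γwait * max (max (t + δ₁) (treq + w₁) - treq - twaitmax) 0 +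
        γtrip * max (max (t + δ₁) (treq + w₁) + π₁ + w₁' - treq - ttripmax) 0) -
      ((max (t + δ₂) (treq + w₂) + π₂ - T) +
        τ * (max (t + δ₂) (treq + w₂) + π₂ + w₂' - treq) +
        ω * (w₂ + w₂') +
        γwait * max (max (t + δ₂) (treq + w₂) - treq - twaitmax) 0 +
        γtrip * max (max (t + δ₂) (treq + w₂) + π₂ + w₂' - treq - ttripmax) 0) < 0 :=
  pals_domination_sufficient_general τ ω γwait γtrip twaitmax ttripmax treq T hτ hγw hγt δ₁ δ₂ w₁ w₂
    w₁' w₂' π₁ π₂ hdom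
end

section
/- DALS domination correctness: suppose label l₁ = (d₁, δ₁) dominates label l₂ = (d₂, δ₂) at vertex v, meaning (with Δ = δ₁ - δ₂, Δw = w'₁ - w'₂, Δ_trip = Δ + Δw): both Δ + τ·Δ_trip + ω·Δw < 0 and Δ + (τ + γ_trip)·Δ_trip + ω·Δw < 0. Then for any two DALS insertions ι₁, ι₂ that share the same pickup detour (hence equal added-trip-time and wait-penalty terms) and whose last-stop-to-dropoff distances satisfy D₁ - D₂ ≤ δ₁ - δ₂, the costs satisfy c(ι₁) < c(ι₂), where c(ι_z) = base + D_z + τ·(t₀ + D_z + w'_z) + ω·(W + w'_z) + γ_trip·max(t₀ + D_z + w'_z - t_max, 0) for some common constants base, t₀, W, t_max. -/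
/-!
Write `Δ = D₁ - D₂` and `Δw = w₁' - w₂'`. Since `x ↦ max x 0` is subadditive, the trip-time
penalty of `ι₁` exceeds that of `ι₂` by at most `γtrip · max (Δ + Δw) 0`, so
`c(ι₁) - c(ι₂) ≤ Δ + τ (Δ + Δw) + ω Δw + γtrip · max (Δ + Δw) 0`. This margin is monotone in `Δ`,
so it may be evaluated at `δ₁ - δ₂` instead, where it equals one of the two dominance
expressions, according to the sign of `Δ + Δw`; both are negative.
-/

def dalsCost (τ ω γtrip base t₀ W tmax D w' : ℝ) : ℝ :=
  base + D + τ * (t₀ + D + w') + ω * (W + w') + γtrip * max (t₀ + D + w' - tmax) 0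

def dominanceMargin (τ ω γtrip Δ Δw : ℝ) : ℝ :=
  Δ + τ * (Δ + Δw) + ω * Δw + γtrip * max (Δ + Δw) 0

theorem dominanceMargin_neg {τ ω γtrip Δ Δw : ℝ}
    (hdom1 : Δ + τ * (Δ + Δw) + ω * Δw < 0)
    (hdom2 : Δ + (τ + γtrip) * (Δ + Δw) + ω * Δw < 0) :
    dominanceMargin τ ω γtrip Δ Δw < 0 := by
  unfold dominanceMargin
  rcases le_total (Δ + Δw) 0 with h | h
  · rw [max_eq_right h]
    linarith
  · rw [max_eq_left h]
    linarith

theorem monotone_dominanceMargin {τ γtrip : ℝ} (hτ : 0 ≤ τ) (hγ : 0 ≤ γtrip) (ω Δw : ℝ) :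
    Monotone fun Δ => dominanceMargin τ ω γtrip Δ Δw := by
  intro a b hab
  dsimp only [dominanceMargin]
  gcongr

theorem dalsCost_sub_le {γtrip : ℝ} (hγ : 0 ≤ γtrip) (τ ω base t₀ W tmax D₁ D₂ w₁' w₂' : ℝ) :
    dalsCost τ ω γtrip base t₀ W tmax D₁ w₁' - dalsCost τ ω γtrip base t₀ W tmax D₂ w₂' ≤
      dominanceMargin τ ω γtrip (D₁ - D₂) (w₁' - w₂') := by
  have hpenalty : max (t₀ + D₁ + w₁' - tmax) 0 ≤
      max (t₀ + D₂ + w₂' - tmax) 0 + max (D₁ - D₂ + (w₁' - w₂')) 0 := by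
    calc max (t₀ + D₁ + w₁' - tmax) 0
        = max (t₀ + D₂ + w₂' - tmax + (D₁ - D₂ + (w₁' - w₂'))) (0 + 0) := by congr 1 <;> ring
      _ ≤ _ := max_add_add_le_max_add_max
  unfold dalsCost dominanceMargin
  linarith [mul_le_mul_of_nonneg_left hpenalty hγ]

theorem dals_domination_correct_general
    (τ ω γtrip : ℝ) (hτ : 0 ≤ τ) (hγ : 0 ≤ γtrip)
    (δ₁ δ₂ w₁' w₂' : ℝ)
    (D₁ D₂ base t₀ W tmax : ℝ)
    (hdist : D₁ - D₂ ≤ δ₁ - δ₂)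
    (hdom1 : (δ₁ - δ₂) + τ * ((δ₁ - δ₂) + (w₁' - w₂')) + ω * (w₁' - w₂') < 0)
    (hdom2 : (δ₁ - δ₂) + (τ + γtrip) * ((δ₁ - δ₂) + (w₁' - w₂')) +
      ω * (w₁' - w₂') < 0) :
    base + D₁ + τ * (t₀ + D₁ + w₁') + ω * (W + w₁') +
      γtrip * max (t₀ + D₁ + w₁' - tmax) 0 <
    base + D₂ + τ * (t₀ + D₂ + w₂') + ω * (W + w₂') +
      γtrip * max (t₀ + D₂ + w₂' - tmax) 0 := by
  have hcost := dalsCost_sub_le hγ τ ω base t₀ W tmax D₁ D₂ w₁' w₂'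
  have hmono : dominanceMargin τ ω γtrip (D₁ - D₂) (w₁' - w₂') ≤
      dominanceMargin τ ω γtrip (δ₁ - δ₂) (w₁' - w₂') :=
    monotone_dominanceMargin hτ hγ ω (w₁' - w₂') hdist
  have hneg := dominanceMargin_neg hdom1 hdom2
  unfold dalsCost at hcost
  linarith

/-- DALS domination correctness: if label `l₁ = (d₁, δ₁)` dominates
`l₂ = (d₂, δ₂)` and `D₁ - D₂ ≤ δ₁ - δ₂`, then the corresponding DALS insertion
costs satisfy `c(ι₁) < c(ι₂)`. -/
theorem dals_domination_correct
    (τ ω γtrip : ℝ) (hτ : 0 ≤ τ) (hω : 0 ≤ ω) (hγ : 0 ≤ γtrip)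
    (δ₁ δ₂ w₁' w₂' : ℝ)
    (hδ₁ : 0 ≤ δ₁) (hδ₂ : 0 ≤ δ₂) (hw₁' : 0 ≤ w₁') (hw₂' : 0 ≤ w₂')
    (D₁ D₂ base t₀ W tmax : ℝ)
    (hdist : D₁ - D₂ ≤ δ₁ - δ₂)
    (hdom1 : (δ₁ - δ₂) + τ * ((δ₁ - δ₂) + (w₁' - w₂')) + ω * (w₁' - w₂') < 0)
    (hdom2 : (δ₁ - δ₂) + (τ + γtrip) * ((δ₁ - δ₂) + (w₁' - w₂')) +
      ω * (w₁' - w₂') < 0) :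
    base + D₁ + τ * (t₀ + D₁ + w₁') + ω * (W + w₁') +
      γtrip * max (t₀ + D₁ + w₁' - tmax) 0 <
    base + D₂ + τ * (t₀ + D₂ + w₂') + ω * (W + w₂') +
      γtrip * max (t₀ + D₂ + w₂' - tmax) 0 :=
  dals_domination_correct_general τ ω γtrip hτ hγ δ₁ δ₂ w₁' w₂' D₁ D₂ base t₀ W tmax hdist hdom1
    hdom2
end
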